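/- Möbius covariance of the Cauchy family: let Φ(z) = (αz + β)/(γz + δ) with real coefficients and αδ − βγ = 1, and let w ∈ ℂ with Im(w) > 0. For all real z' not equal to the pole α/γ of Φ⁻¹, the pointwise density identity ρ_w(Φ⁻¹(z'))·|dΦ⁻¹/dz'(z')| = ρ_{Φ(w)}(z') holds, where ρ_w(z) = (1/π)·Im(w)/|z − w|². -/

import Mathlib

/-!
For real `x` with `-γ x + α ≠ 0` one has
`Φ⁻¹(x) - w = (x - Φ(w)) (γ w + δ) / (-γ x + α)`, while `Im Φ(w) = Im w / |γ w + δ|²`.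
So the Jacobian `1 / (-γ x + α)²` cancels the factor `(-γ x + α)²` coming from the distance,
and the leftover `|γ w + δ|²` is exactly the one in `Im Φ(w)`.
-/

namespace Complex

theorem im_real_mobius (α β γ δ : ℝ) (w : ℂ) :
    (((α : ℂ) * w + β) / ((γ : ℂ) * w + δ)).im
      = (α * δ - β * γ) * w.im / normSq ((γ : ℂ) * w + δ) := by
  simp only [div_im, add_re, add_im, mul_re, mul_im, ofReal_re, ofReal_im]
  ring

theorem real_mobius_denom_ne_zero {α β γ δ : ℝ} (hdet : α * δ - β * γ ≠ 0) {w : ℂ}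
    (hw : w.im ≠ 0) : (γ : ℂ) * w + δ ≠ 0 := by
  intro h
  have hγ : γ = 0 := by simpa [hw] using congrArg im h
  have hδ : δ = 0 := by simpa [hγ] using congrArg re h
  simp [hγ, hδ] at hdet

theorem ofReal_real_mobius_inv_sub {α β γ δ : ℝ} {w : ℂ} {x : ℝ} (hx : -γ * x + α ≠ 0)
    (hc : (γ : ℂ) * w + δ ≠ 0) :
    (((δ * x - β) / (-γ * x + α) : ℝ) : ℂ) - w
      = ((x : ℂ) - ((α : ℂ) * w + β) / ((γ : ℂ) * w + δ)) * ((γ : ℂ) * w + δ)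
          / ((-γ * x + α : ℝ) : ℂ) := by
  have ha : ((-γ * x + α : ℝ) : ℂ) ≠ 0 := ofReal_ne_zero.mpr hx
  rw [sub_mul, div_mul_cancel₀ _ hc, eq_div_iff ha, sub_mul, ofReal_div, div_mul_cancel₀ _ ha]
  push_cast
  ring

end Complex

open Complex in
/-- Möbius covariance of the Cauchy family: pointwise density identity. -/
theorem cauchy_density_mobius_covariance (α β γ δ : ℝ)
    (hdet : α * δ - β * γ = 1) (w : ℂ) (hw : 0 < w.im)
    (z' : ℝ) (hz' : -γ * z' + α ≠ 0) :
    (1 / Real.pi) * w.im /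
        ‖((((δ * z' - β) / (-γ * z' + α) : ℝ)) : ℂ) - w‖ ^ 2
        * |1 / (-γ * z' + α) ^ 2|
      = (1 / Real.pi) * (((α : ℂ) * w + β) / ((γ : ℂ) * w + δ)).im /
          ‖(z' : ℂ) - ((α : ℂ) * w + β) / ((γ : ℂ) * w + δ)‖ ^ 2 := by
  have hc := real_mobius_denom_ne_zero (hdet ▸ one_ne_zero) hw.ne'
  rw [ofReal_real_mobius_inv_sub hz' hc, im_real_mobius, hdet, normSq_eq_norm_sq, norm_div,
    norm_mul, norm_real, Real.norm_eq_abs, div_pow, mul_pow, sq_abs, abs_of_pos (by positivity),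
    div_div_eq_mul_div, mul_one_div, div_div, mul_div_mul_right _ _ (pow_ne_zero 2 hz')]
  ring
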